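/- arXiv:2011.03714 — 2 statements merged into one kernel-verified Lean document; each statement's English description precedes it below -/
import Mathlib

section
/- Let λ ∈ ℂ with λ ≠ 0. Define T : ℂ² → ℂ² on the standard basis by T(e₀) = e₁ and T(e₁) = λ·e₀, and grade ℂ² by V₀ = ℂe₀, V₁ = ℂe₁. Then the only subspaces W ⊆ ℂ² with W = (W ∩ V₀) ⊕ (W ∩ V₁) and T(W) ⊆ W are W = 0 and W = ℂ². -/
theorem stmt_1 (lam : ℂ) (hlam : lam ≠ 0)
    (T : (ℂ × ℂ) →ₗ[ℂ] (ℂ × ℂ))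
    (hT : ∀ x y : ℂ, T (x, y) = (lam * y, x)) :
    ∀ W : Submodule ℂ (ℂ × ℂ),
      W = (W ⊓ Submodule.span ℂ {((1 : ℂ), (0 : ℂ))}) ⊔
            (W ⊓ Submodule.span ℂ {((0 : ℂ), (1 : ℂ))}) →
      W.map T ≤ W →
      W = ⊥ ∨ W = ⊤ := by
  intro W hgr hinv
  by_cases hbot : W = ⊥
  · exact Or.inl hbot
  right
  -- key: if (1,0) ∈ W then W = ⊤
  have key : ((1 : ℂ), (0 : ℂ)) ∈ W → W = ⊤ := by
    intro h10
    have h01 : ((0 : ℂ), (1 : ℂ)) ∈ W := by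
      apply hinv
      refine ⟨((1 : ℂ), (0 : ℂ)), h10, ?_⟩
      rw [hT]; simp
    apply le_antisymm le_top
    intro v _
    have : v = v.1 • ((1 : ℂ), (0 : ℂ)) + v.2 • ((0 : ℂ), (1 : ℂ)) := by
      simp [Prod.ext_iff]
    rw [this]
    exact W.add_mem (W.smul_mem _ h10) (W.smul_mem _ h01)
  -- get a nonzero element
  obtain ⟨v, hv, hvne⟩ := Submodule.exists_mem_ne_zero_of_ne_bot hbot
  have hv' := hgr ▸ hv
  rw [Submodule.mem_sup] at hv'
  obtain ⟨u, hu, w, hw, huw⟩ := hv'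
  obtain ⟨hu1, hu2⟩ := hu
  obtain ⟨hw1, hw2⟩ := hw
  rw [SetLike.mem_coe, Submodule.mem_span_singleton] at hu2 hw2
  obtain ⟨a, ha⟩ := hu2
  obtain ⟨b, hb⟩ := hw2
  have h10 : (a ≠ 0) ∨ (b ≠ 0) := by
    by_contra hc
    push_neg at hc
    apply hvne
    rw [← huw, ← ha, ← hb, hc.1, hc.2]
    simp
  -- from (a,0) ∈ W with a ≠ 0, get (1,0) ∈ W
  have step1 : ∀ a : ℂ, a ≠ 0 → (a, (0:ℂ)) ∈ W → ((1:ℂ), (0:ℂ)) ∈ W := by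
    intro a ha0 haW
    have := W.smul_mem a⁻¹ haW
    simpa [smul_eq_mul, inv_mul_cancel₀ ha0] using this
  rcases h10 with ha0 | hb0
  · apply key
    apply step1 a ha0
    have : u = (a, (0:ℂ)) := by rw [← ha]; simp [Prod.ext_iff]
    rwa [← this]
  · apply key
    have hwW : ((0:ℂ), b) ∈ W := by
      have : w = ((0:ℂ), b) := by rw [← hb]; simp [Prod.ext_iff]
      rwa [← this]
    have hTw : (lam * b, (0:ℂ)) ∈ W := by
      apply hinv
      exact ⟨((0:ℂ), b), hwW, by rw [hT]⟩
    exact step1 _ (mul_ne_zero hlam hb0) hTw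
end

section
/- Let M ∈ ℕ and define the (M+1)×(M+1) matrix B over ℚ with rows and columns indexed by 0,…,M by B_{j,p} = 2^{2j+1−p}·C(M, 2j−p), where C(M,k) is the binomial coefficient, interpreted as 0 when 2j − p < 0 or 2j − p > M. Then B is invertible. -/
/-!
Reading a vector `v` as the coefficients of a polynomial `f` of degree `≤ M`, row `j` of the
matrix is twice the coefficient of `X^(2j)` in `g = f · (1 + 2X)^M`. If `v` is in the kernel,
`g` has degree `≤ 2M` and no even coefficients, so `g(-X) = -g(X)`, i.e.
`f(-X) (1 - 2X)^M = -f(X) (1 + 2X)^M`. As `1 - 2X` and `1 + 2X` are coprime, `(1 - 2X)^M ∣ f`;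
moreover `f(0) = g(0) = 0`, so `X (1 - 2X)^M ∣ f`, which has degree `≤ M`, forcing `f = 0`.
-/

open Polynomial
open scoped Matrix

namespace Polynomial

section CommRing

variable {R : Type*} [CommRing R]

lemma coeff_comp_neg_X (p : R[X]) (n : ℕ) : (p.comp (-X)).coeff n = (-1) ^ n * p.coeff n := by
  rw [show (-X : R[X]) = C (-1) * X by simp, comp_C_mul_X_coeff, mul_comm]

lemma comp_neg_X_eq_neg_of_coeff_even_eq_zero {g : R[X]} (h : ∀ n, Even n → g.coeff n = 0) :
    g.comp (-X) = -g := by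
  ext n
  rw [coeff_comp_neg_X, coeff_neg]
  rcases Nat.even_or_odd n with hn | hn
  · rw [h n hn, mul_zero, neg_zero]
  · rw [hn.neg_one_pow, neg_one_mul]

lemma coeff_one_add_C_mul_X_pow (a : R) (M k : ℕ) :
    ((1 + C a * X) ^ M).coeff k = a ^ k * M.choose k := by
  have : (1 + C a * X) ^ M = ((1 + X) ^ M).comp (C a * X) := by
    rw [pow_comp, add_comp, one_comp, X_comp]
  rw [this, comp_C_mul_X_coeff, coeff_one_add_X_pow, mul_comm]

lemma one_add_C_mul_X_comp_neg_X (a : R) : (1 + C a * X).comp (-X) = 1 + C (-a) * X := by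
  rw [add_comp, one_comp, mul_comp, C_comp, X_comp, C_neg]
  ring

lemma isCoprime_X_one_add_C_mul_X (a : R) : IsCoprime X (1 + C a * X) :=
  ⟨-C a, 1, by ring⟩

lemma isCoprime_one_add_C_mul_X_one_add_C_neg_mul_X (h2 : IsUnit (2 : R)) (a : R) :
    IsCoprime (1 + C a * X) (1 + C (-a) * X) := by
  obtain ⟨u, hu⟩ := h2
  have hsum : 1 + C a * X + (1 + C (-a) * X) = C (u : R) := by
    rw [hu, C_neg, map_ofNat C 2]
    ring
  exact ⟨C ↑u⁻¹, C ↑u⁻¹, by rw [← mul_add, hsum, ← C_mul, Units.inv_mul, C_1]⟩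

end CommRing

section IsDomain

variable {R : Type*} [CommRing R] [IsDomain R]

lemma natDegree_X_mul_one_add_C_mul_X_pow {a : R} (ha : a ≠ 0) (M : ℕ) :
    (X * (1 + C a * X) ^ M).natDegree = M + 1 := by
  have h1 : (1 + C a * X).natDegree = 1 := by
    rw [add_comm, ← C_1, natDegree_linear ha]
  rw [natDegree_mul X_ne_zero (pow_ne_zero _ (ne_zero_of_natDegree_gt (h1 ▸ one_pos))),
    natDegree_pow, h1, natDegree_X]
  ring

theorem eq_zero_of_coeff_even_mul_one_add_C_mul_X_pow_eq_zero (h2 : IsUnit (2 : R)) {a : R}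
    (ha : a ≠ 0) {M : ℕ} {f : R[X]} (hf : f.natDegree ≤ M)
    (h : ∀ n, Even n → (f * (1 + C a * X) ^ M).coeff n = 0) : f = 0 := by
  have hodd : f.comp (-X) * (1 + C (-a) * X) ^ M = -(f * (1 + C a * X) ^ M) := by
    rw [← comp_neg_X_eq_neg_of_coeff_even_eq_zero h, mul_comp, pow_comp,
      one_add_C_mul_X_comp_neg_X]
  have hN : (1 + C (-a) * X) ^ M ∣ f := by
    have hcop := (isCoprime_one_add_C_mul_X_one_add_C_neg_mul_X h2 a).symm.pow (m := M) (n := M)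
    refine hcop.dvd_of_dvd_mul_right ?_
    rw [← dvd_neg, ← hodd]
    exact dvd_mul_left _ _
  have hX : X ∣ f := by
    have h0 := h 0 ⟨0, rfl⟩
    rwa [mul_coeff_zero, coeff_one_add_C_mul_X_pow, pow_zero, Nat.choose_zero_right,
      Nat.cast_one, mul_one, mul_one, ← X_dvd_iff] at h0
  have hXN := (isCoprime_X_one_add_C_mul_X (-a)).pow_right.mul_dvd hX hN
  refine eq_zero_of_dvd_of_natDegree_lt hXN ?_
  rw [natDegree_X_mul_one_add_C_mul_X_pow (neg_ne_zero.2 ha)]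
  omega

end IsDomain

end Polynomial

section EvenCoeffMatrix

variable {K : Type*} [Field K]

def evenCoeffMatrix (a : K) (M : ℕ) : Matrix (Fin (M + 1)) (Fin (M + 1)) K :=
  Matrix.of fun j p =>
    if (p : ℕ) ≤ 2 * (j : ℕ) then a ^ (2 * (j : ℕ) - p) * (M.choose (2 * (j : ℕ) - p) : K)
    else 0

lemma evenCoeffMatrix_mulVec [DecidableEq K] (a : K) (M : ℕ) (v : Fin (M + 1) → K)
    (j : Fin (M + 1)) :
    (evenCoeffMatrix a M *ᵥ v) j = (ofFn (M + 1) v * (1 + C a * X) ^ M).coeff (2 * j) := by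
  rw [Matrix.mulVec, dotProduct, ofFn_eq_sum_monomial, Finset.sum_mul, finsetSum_coeff]
  refine Finset.sum_congr rfl fun p _ => ?_
  rw [evenCoeffMatrix, Matrix.of_apply, ← C_mul_X_pow_eq_monomial, mul_assoc, coeff_C_mul,
    coeff_X_pow_mul']
  split_ifs
  · rw [coeff_one_add_C_mul_X_pow, mul_comm]
  · rw [zero_mul, mul_zero]

theorem isUnit_evenCoeffMatrix (h2 : (2 : K) ≠ 0) {a : K} (ha : a ≠ 0) (M : ℕ) :
    IsUnit (evenCoeffMatrix a M) := by
  classical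
  rw [← Matrix.mulVec_injective_iff_isUnit]
  intro v w hvw
  rw [← sub_eq_zero, ← Matrix.mulVec_sub] at hvw
  rw [← sub_eq_zero]
  set u := v - w
  have hf : (ofFn (M + 1) u).natDegree ≤ M :=
    Nat.le_of_lt_succ (ofFn_natDegree_lt (Nat.le_add_left 1 M) u)
  have hdeg : (ofFn (M + 1) u * (1 + C a * X) ^ M).natDegree ≤ 2 * M := by
    have hP : (1 + C a * X).natDegree ≤ 1 := by
      rw [add_comm, ← C_1]
      exact natDegree_linear_le
    have := natDegree_pow_le_of_le M hP
    exact natDegree_mul_le.trans (by omega)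
  have heven : ∀ n, Even n → (ofFn (M + 1) u * (1 + C a * X) ^ M).coeff n = 0 := by
    rintro n ⟨j, rfl⟩
    rw [← two_mul]
    by_cases hj : j ≤ M
    · rw [← evenCoeffMatrix_mulVec a M u ⟨j, by omega⟩, hvw, Pi.zero_apply]
    · exact coeff_eq_zero_of_natDegree_lt (by omega)
  exact injective_ofFn (M + 1) (by
    rw [eq_zero_of_coeff_even_mul_one_add_C_mul_X_pow_eq_zero h2.isUnit ha hf heven, map_zero])

end EvenCoeffMatrix

theorem stmt_14 (M : ℕ) :
    IsUnit (Matrix.of (fun j p : Fin (M + 1) =>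
      if (p : ℕ) ≤ 2 * (j : ℕ) then
        ((2 ^ (2 * (j : ℕ) + 1 - (p : ℕ)) * Nat.choose M (2 * (j : ℕ) - (p : ℕ)) : ℕ) : ℚ)
      else 0)) := by
  have hB : IsUnit ((2 : ℚ) • evenCoeffMatrix (2 : ℚ) M) := by
    rw [Matrix.isUnit_iff_isUnit_det, Matrix.det_smul]
    exact (IsUnit.pow _ (by norm_num)).mul ((Matrix.isUnit_iff_isUnit_det _).1
      (isUnit_evenCoeffMatrix two_ne_zero two_ne_zero M))
  convert hB using 1
  ext j p
  rw [Matrix.of_apply, Matrix.smul_apply, evenCoeffMatrix, Matrix.of_apply, smul_eq_mul]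
  split_ifs with h
  · rw [show 2 * (j : ℕ) + 1 - p = 2 * j - p + 1 by omega]
    push_cast
    ring
  · rw [mul_zero]
end
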